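/- arXiv:2401.04993 — 5 statements merged into one kernel-verified Lean document; each statement's English description precedes it below -/
import Mathlib

section
/- Let g̃_1,…,g̃_K be nonzero pairwise orthogonal vectors in E, and let S, λ*_k, d be as defined. Then λ*_k > 0 for every k, Σ_{k=1}^K λ*_k = 1, ‖d‖² = 1/S, and for every λ ∈ ℝ^K with λ_k ≥ 0 for all k and Σ_{k=1}^K λ_k = 1 one has ‖Σ_{k=1}^K λ_k g̃_k‖² ≥ 1/S; that is, d is the minimum-norm element of the convex hull of {g̃_1,…,g̃_K}. -/
open RealInnerProductSpace Finset

lemma adafed_norm_sq_sum {E : Type*} [NormedAddCommGroup E] [InnerProductSpace ℝ E]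
    {K : ℕ} (g : Fin K → E) (horth : ∀ i j, i ≠ j → ⟪g i, g j⟫ = 0)
    (c : Fin K → ℝ) :
    ‖∑ k, c k • g k‖ ^ 2 = ∑ k, (c k) ^ 2 * ‖g k‖ ^ 2 := by
  rw [← real_inner_self_eq_norm_sq, inner_sum]
  refine Finset.sum_congr rfl fun j _ => ?_
  rw [sum_inner, Finset.sum_eq_single j]
  · rw [real_inner_smul_left, real_inner_smul_right, real_inner_self_eq_norm_sq]
    ring
  · intro i _ hij
    rw [real_inner_smul_left, real_inner_smul_right, horth i j hij]
    ring
  · intro h; exact absurd (Finset.mem_univ j) h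

/-- The minimum-norm element of the convex hull of nonzero pairwise orthogonal
vectors `g 1, …, g K`: with `S = ∑ 1/‖g k‖²`, `λ* k = 1/(‖g k‖² S)` and
`d = ∑ λ* k • g k`, the weights `λ*` are positive and sum to one, `‖d‖² = 1/S`,
and every convex combination of the `g k` has squared norm at least `1/S`. -/
theorem adafed_min_norm_element {E : Type*} [NormedAddCommGroup E] [InnerProductSpace ℝ E]
    {K : ℕ} (hK : 0 < K) (g : Fin K → E)
    (hg : ∀ k, g k ≠ 0)
    (horth : ∀ i j, i ≠ j → ⟪g i, g j⟫ = 0)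
    (S : ℝ) (hS : S = ∑ k, 1 / ‖g k‖ ^ 2)
    (lam : Fin K → ℝ) (hlam : ∀ k, lam k = 1 / (‖g k‖ ^ 2 * S))
    (d : E) (hd : d = ∑ k, lam k • g k) :
    (∀ k, 0 < lam k) ∧ (∑ k, lam k = 1) ∧ ‖d‖ ^ 2 = 1 / S ∧
      ∀ μ : Fin K → ℝ, (∀ k, 0 ≤ μ k) → (∑ k, μ k = 1) →
        1 / S ≤ ‖∑ k, μ k • g k‖ ^ 2 := by
  have hgpos : ∀ k, 0 < ‖g k‖ ^ 2 := fun k => pow_pos (norm_pos_iff.mpr (hg k)) 2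
  have hgne : ∀ k, ‖g k‖ ^ 2 ≠ 0 := fun k => (hgpos k).ne'
  have hSpos : 0 < S := by
    rw [hS]
    refine Finset.sum_pos (fun k _ => div_pos one_pos (hgpos k)) ?_
    exact Finset.univ_nonempty_iff.mpr ⟨⟨0, hK⟩⟩
  have hSne : S ≠ 0 := hSpos.ne'
  have hlampos : ∀ k, 0 < lam k := fun k => by
    rw [hlam k]; exact div_pos one_pos (mul_pos (hgpos k) hSpos)
  have hsum : ∑ k, lam k = 1 := by
    have : ∑ k, lam k = (∑ k, 1 / ‖g k‖ ^ 2) / S := by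
      rw [Finset.sum_div]
      exact Finset.sum_congr rfl fun k _ => by rw [hlam k]; field_simp
    rw [this, ← hS, div_self hSne]
  refine ⟨hlampos, hsum, ?_, ?_⟩
  · rw [hd, adafed_norm_sq_sum g horth]
    have : ∀ k, (lam k) ^ 2 * ‖g k‖ ^ 2 = (1 / ‖g k‖ ^ 2) * (1 / S ^ 2) := by
      intro k
      rw [hlam k]
      field_simp [hgne k, hSne]
    rw [Finset.sum_congr rfl fun k _ => this k, ← Finset.sum_mul, ← hS]
    field_simp
  · intro μ hμ hμs
    rw [adafed_norm_sq_sum g horth]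
    rw [div_le_iff₀ hSpos]
    have h1 : ∑ k, (μ k * ‖g k‖) * (1 / ‖g k‖) = 1 := by
      have he : ∀ k : Fin K, μ k * ‖g k‖ * (1 / ‖g k‖) = μ k := by
        intro k
        have hn : ‖g k‖ ≠ 0 := norm_ne_zero_iff.mpr (hg k)
        rw [mul_assoc, mul_one_div, div_self hn, mul_one]
      rw [Finset.sum_congr rfl fun k _ => he k, hμs]
    have h2 := Finset.sum_mul_sq_le_sq_mul_sq Finset.univ
      (fun k => μ k * ‖g k‖) (fun k => 1 / ‖g k‖)
    rw [h1, one_pow] at h2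
    calc 1 ≤ (∑ k, (μ k * ‖g k‖) ^ 2) * ∑ k, (1 / ‖g k‖) ^ 2 := h2
    _ = (∑ k, μ k ^ 2 * ‖g k‖ ^ 2) * S := by
        rw [hS]
        congr 1
        · exact Finset.sum_congr rfl fun k _ => by ring
        · exact Finset.sum_congr rfl fun k _ => by rw [div_pow, one_pow]
end

section
/- (Theorem 1 of the paper.) Let g_1,…,g_K be vectors in E, f_1,…,f_K nonzero reals, γ > 0, and let g̃_1,…,g̃_K be produced by the AdaFed modified Gram–Schmidt recursion, assumed nonzero and pairwise orthogonal. Set S = Σ_{k=1}^K 1/‖g̃_k‖², λ*_k = 1/(‖g̃_k‖² · S), and d = Σ_{k=1}^K λ*_k g̃_k. Then for every k ∈ {1,…,K}: ⟨g_k, d⟩ = |f_k|^γ / S > 0. In particular −d is a common descent direction for all k (all directional derivatives ⟨g_k, d⟩ are positive), and ⟨g_k, d⟩ is proportional to |f_k|^γ. -/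
open RealInnerProductSpace Finset

/-!
Every `g k` lies in the span of `gs k` and the earlier `gs i`: undoing the recursion gives
`g k = c • gs k + ∑_{i<k} aᵢ • gs i`, where `aᵢ = ⟪g k, gs i⟫ / ⟪gs i, gs i⟫` and
`c = |f k|^γ - ∑_{i<k} aᵢ`. The weights `λ*` are chosen so that `d` has the same inner product
`1 / S` with every `gs i`, so `⟪g k, d⟫ = (c + ∑_{i<k} aᵢ) / S = |f k|^γ / S`.
-/

section OrthogonalFamily

variable {E ι : Type*} [NormedAddCommGroup E] [InnerProductSpace ℝ E] [Fintype ι]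

theorem inner_sum_smul_of_pairwise_orthogonal {v : ι → E}
    (horth : Pairwise fun i j => ⟪v i, v j⟫ = 0) (c : ι → ℝ) (j : ι) :
    ⟪v j, ∑ i, c i • v i⟫ = c j * ‖v j‖ ^ 2 := by
  rw [inner_sum, Finset.sum_eq_single j]
  · rw [real_inner_smul_right, real_inner_self_eq_norm_sq]
  · intro i _ hij
    rw [real_inner_smul_right, horth hij.symm, mul_zero]
  · exact fun hj => absurd (Finset.mem_univ j) hj

theorem inner_sum_inv_norm_sq_smul_of_pairwise_orthogonal {v : ι → E}
    (horth : Pairwise fun i j => ⟪v i, v j⟫ = 0) {j : ι} (hj : v j ≠ 0) (S : ℝ) :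
    ⟪v j, ∑ i, (1 / (‖v i‖ ^ 2 * S)) • v i⟫ = 1 / S := by
  have hnorm : ‖v j‖ ^ 2 ≠ 0 := pow_ne_zero 2 (norm_ne_zero_iff.mpr hj)
  rw [inner_sum_smul_of_pairwise_orthogonal horth, one_div_mul_eq_div,
    div_mul_cancel_left₀ hnorm, one_div]

end OrthogonalFamily

theorem sum_one_div_norm_sq_pos {E ι : Type*} [NormedAddCommGroup E] [Fintype ι] [Nonempty ι]
    {v : ι → E} (hv : ∀ i, v i ≠ 0) : 0 < ∑ i, 1 / ‖v i‖ ^ 2 :=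
  Finset.sum_pos (fun i _ => by have := norm_pos_iff.mpr (hv i); positivity) univ_nonempty

theorem eq_smul_add_of_ne_zero_of_eq_inv_smul_sub {E : Type*} [AddCommGroup E] [Module ℝ E]
    {x y z : E} {c : ℝ} (hx : x ≠ 0) (h : x = c⁻¹ • (y - z)) : y = c • x + z := by
  have hc : c ≠ 0 := by
    rintro rfl
    exact hx (by simpa using h)
  rw [h, smul_inv_smul₀ hc, sub_add_cancel]

theorem inner_smul_add_sum_smul_of_inner_eq {E ι : Type*} [NormedAddCommGroup E]
    [InnerProductSpace ℝ E] {v : ι → E} {d : E} {t : ℝ} (hv : ∀ i, ⟪v i, d⟫ = t)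
    (c : ℝ) (k : ι) (s : Finset ι) (a : ι → ℝ) :
    ⟪c • v k + ∑ i ∈ s, a i • v i, d⟫ = (c + ∑ i ∈ s, a i) * t := by
  simp only [inner_add_left, sum_inner, real_inner_smul_left, hv, add_mul, Finset.sum_mul]

theorem adafed_theorem1_general {E : Type*} [NormedAddCommGroup E] [InnerProductSpace ℝ E]
    {K : ℕ} (g : Fin K → E) (f : Fin K → ℝ) (γ : ℝ)
    (hf : ∀ k, f k ≠ 0)
    (gs : Fin K → E)
    (hgs : ∀ k, gs k ≠ 0)
    (horth : ∀ i j, i ≠ j → ⟪gs i, gs j⟫ = 0)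
    (hrec : ∀ k, gs k =
      (|f k| ^ γ - ∑ i ∈ Finset.Iio k, ⟪g k, gs i⟫ / ⟪gs i, gs i⟫)⁻¹ •
        (g k - ∑ i ∈ Finset.Iio k, (⟪g k, gs i⟫ / ⟪gs i, gs i⟫) • gs i))
    (S : ℝ) (hS : S = ∑ k, 1 / ‖gs k‖ ^ 2)
    (lam : Fin K → ℝ) (hlam : ∀ k, lam k = 1 / (‖gs k‖ ^ 2 * S))
    (d : E) (hd : d = ∑ k, lam k • gs k) :
    ∀ k, ⟪g k, d⟫ = |f k| ^ γ / S ∧ 0 < ⟪g k, d⟫ := by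
  intro k
  have : Nonempty (Fin K) := ⟨k⟩
  have hSpos : 0 < S := hS ▸ sum_one_div_norm_sq_pos hgs
  have hgs_d : ∀ i, ⟪gs i, d⟫ = 1 / S := fun i => by
    rw [hd, funext hlam]
    exact inner_sum_inv_norm_sq_smul_of_pairwise_orthogonal horth (hgs i) S
  have hgk := eq_smul_add_of_ne_zero_of_eq_inv_smul_sub (hgs k) (hrec k)
  have key : ⟪g k, d⟫ = |f k| ^ γ / S := by
    rw [hgk, inner_smul_add_sum_smul_of_inner_eq hgs_d, sub_add_cancel, mul_one_div]
  have : 0 < |f k| := abs_pos.mpr (hf k)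
  exact ⟨key, key ▸ by positivity⟩

/-- Theorem 1 of the paper: with `gs` produced by the AdaFed modified
Gram–Schmidt recursion (assumed nonzero and pairwise orthogonal),
`S = ∑ 1/‖gs k‖²`, `λ* k = 1/(‖gs k‖² S)`, `d = ∑ λ* k • gs k`, one has
`⟪g k, d⟫ = |f k|^γ / S > 0` for every `k`. -/
theorem adafed_theorem1 {E : Type*} [NormedAddCommGroup E] [InnerProductSpace ℝ E]
    {K : ℕ} (g : Fin K → E) (f : Fin K → ℝ) (γ : ℝ) (hγ : 0 < γ)
    (hf : ∀ k, f k ≠ 0)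
    (gs : Fin K → E)
    (hgs : ∀ k, gs k ≠ 0)
    (horth : ∀ i j, i ≠ j → ⟪gs i, gs j⟫ = 0)
    (hdenom : ∀ k, |f k| ^ γ - ∑ i ∈ Finset.Iio k, ⟪g k, gs i⟫ / ⟪gs i, gs i⟫ ≠ 0)
    (hrec : ∀ k, gs k =
      (|f k| ^ γ - ∑ i ∈ Finset.Iio k, ⟪g k, gs i⟫ / ⟪gs i, gs i⟫)⁻¹ •
        (g k - ∑ i ∈ Finset.Iio k, (⟪g k, gs i⟫ / ⟪gs i, gs i⟫) • gs i))
    (S : ℝ) (hS : S = ∑ k, 1 / ‖gs k‖ ^ 2)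
    (lam : Fin K → ℝ) (hlam : ∀ k, lam k = 1 / (‖gs k‖ ^ 2 * S))
    (d : E) (hd : d = ∑ k, lam k • gs k) :
    ∀ k, ⟪g k, d⟫ = |f k| ^ γ / S ∧ 0 < ⟪g k, d⟫ :=
  adafed_theorem1_general g f γ hf gs hgs horth hrec S hS lam hlam d hd
end

section
/- (Theorem 2 of the paper.) Let f_1,…,f_K : E → ℝ be differentiable and L-smooth (L > 0). Let θ, d ∈ E and c_1,…,c_K ≥ 0 be such that ⟨∇f_k(θ), d⟩ = c_k · ‖d‖² for every k (in the AdaFed construction c_k = |f_k(θ)|^γ). If the step size η satisfies 0 ≤ η ≤ (2/L) · min_{k} c_k, then f_k(θ − η d) ≤ f_k(θ) for every k ∈ {1,…,K}. -/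
/-!
Along the segment from `x` to `y`, the function
`t ↦ f (x + t • (y - x)) - t * f' x (y - x) - L / 2 * t ^ 2 * ‖y - x‖ ^ 2`
has nonpositive derivative on `[0, 1]` because `f'` is `L`-Lipschitz; comparing its values at
`0` and `1` gives the quadratic upper bound `f y ≤ f x + f' x (y - x) + L / 2 * ‖y - x‖ ^ 2`.
For `y = θ - η • d` with `⟪∇f θ, d⟫ = c * ‖d‖ ^ 2`, the right-hand side is
`f θ - η * (c - L / 2 * η) * ‖d‖ ^ 2`, which is at most `f θ` as soon as `L / 2 * η ≤ c`.
-/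

open RealInnerProductSpace

section Descent

variable {E : Type*} [NormedAddCommGroup E] [NormedSpace ℝ E]
  {f : E → ℝ} {f' : E → E →L[ℝ] ℝ} {L : ℝ}

lemma apply_add_smul_sub_apply_le (hs : ∀ x y, ‖f' x - f' y‖ ≤ L * ‖x - y‖) (x v : E)
    {t : ℝ} (ht : 0 ≤ t) : f' (x + t • v) v - f' x v ≤ L * t * ‖v‖ ^ 2 :=
  calc f' (x + t • v) v - f' x v = (f' (x + t • v) - f' x) v := rfl
    _ ≤ ‖f' (x + t • v) - f' x‖ * ‖v‖ := (le_abs_self _).trans ((f' _ - f' x).le_opNorm v)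
    _ ≤ L * ‖x + t • v - x‖ * ‖v‖ := by gcongr; exact hs _ _
    _ = L * t * ‖v‖ ^ 2 := by
      rw [add_sub_cancel_left, norm_smul, Real.norm_of_nonneg ht]; ring

theorem le_add_apply_sub_add_half_mul_sq (hf : ∀ x, HasFDerivAt f (f' x) x)
    (hs : ∀ x y, ‖f' x - f' y‖ ≤ L * ‖x - y‖) (x y : E) :
    f y ≤ f x + f' x (y - x) + L / 2 * ‖y - x‖ ^ 2 := by
  set v := y - x
  let φ : ℝ → ℝ := fun t ↦ f (x + t • v) - t * f' x v - L / 2 * t ^ 2 * ‖v‖ ^ 2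
  have hφ : ∀ t : ℝ, HasDerivAt φ (f' (x + t • v) v - f' x v - L * t * ‖v‖ ^ 2) t := by
    intro t
    have hline : HasDerivAt (fun s : ℝ ↦ x + s • v) v t := by
      simpa using ((hasDerivAt_id t).smul_const v).const_add x
    have hquad := ((hasDerivAt_pow 2 t).const_mul (L / 2)).mul_const (‖v‖ ^ 2)
    refine ((((hf _).comp_hasDerivAt t hline).sub
      ((hasDerivAt_id t).mul_const (f' x v))).sub hquad).congr_deriv ?_
    simp only [one_mul, Nat.cast_ofNat, Nat.add_one_sub_one, pow_one]
    ring
  have hanti : AntitoneOn φ (Set.Icc 0 1) := by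
    refine antitoneOn_of_hasDerivWithinAt_nonpos (convex_Icc 0 1)
      (fun t _ ↦ (hφ t).continuousAt.continuousWithinAt) (fun t _ ↦ (hφ t).hasDerivWithinAt) ?_
    intro t ht
    rw [interior_Icc] at ht
    linarith [apply_add_smul_sub_apply_le hs x v ht.1.le]
  have h01 := hanti (Set.left_mem_Icc.2 zero_le_one) (Set.right_mem_Icc.2 zero_le_one) zero_le_one
  simp only [φ, one_smul, zero_smul, add_zero, add_sub_cancel, one_pow, zero_pow two_ne_zero,
    one_mul, zero_mul, mul_zero, sub_zero, v] at h01
  linarith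

end Descent

section Gradient

variable {E : Type*} [NormedAddCommGroup E] [InnerProductSpace ℝ E] [CompleteSpace E]
  {f : E → ℝ} {g : E → E} {L : ℝ}

theorem le_add_inner_add_half_mul_sq (hf : ∀ x, HasGradientAt f (g x) x)
    (hs : ∀ x y, ‖g x - g y‖ ≤ L * ‖x - y‖) (x y : E) :
    f y ≤ f x + ⟪g x, y - x⟫ + L / 2 * ‖y - x‖ ^ 2 := by
  refine le_add_apply_sub_add_half_mul_sq (f' := fun x ↦ InnerProductSpace.toDual ℝ E (g x))
    (fun x ↦ (hf x).hasFDerivAt) (fun x y ↦ ?_) x y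
  rw [← map_sub, LinearIsometryEquiv.norm_map]
  exact hs x y

theorem apply_sub_smul_le (hf : ∀ x, HasGradientAt f (g x) x)
    (hs : ∀ x y, ‖g x - g y‖ ≤ L * ‖x - y‖) {θ d : E} {c η : ℝ}
    (hinner : ⟪g θ, d⟫ = c * ‖d‖ ^ 2) (hη0 : 0 ≤ η) (hη : L / 2 * η ≤ c) :
    f (θ - η • d) ≤ f θ := by
  have hdesc := le_add_inner_add_half_mul_sq hf hs θ (θ - η • d)
  rw [sub_sub_cancel_left, inner_neg_right, real_inner_smul_right, hinner, norm_neg, norm_smul,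
    Real.norm_of_nonneg hη0] at hdesc
  have hgain : 0 ≤ η * (c - L / 2 * η) * ‖d‖ ^ 2 :=
    mul_nonneg (mul_nonneg hη0 (sub_nonneg.2 hη)) (sq_nonneg _)
  linarith

end Gradient

theorem adafed_theorem2_general {E : Type*} [NormedAddCommGroup E] [InnerProductSpace ℝ E] [CompleteSpace E]
    {K : ℕ} (f : Fin K → E → ℝ) (grad : Fin K → E → E)
    (hgrad : ∀ k x, HasGradientAt (f k) (grad k x) x)
    (L : ℝ) (hL : 0 < L)
    (hsmooth : ∀ k x y, ‖grad k x - grad k y‖ ≤ L * ‖x - y‖)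
    (θ d : E) (c : Fin K → ℝ)
    (hinner : ∀ k, ⟪grad k θ, d⟫ = c k * ‖d‖ ^ 2)
    (η : ℝ) (hη0 : 0 ≤ η) (hη : η ≤ 2 / L * ⨅ k, c k) :
    ∀ k, f k (θ - η • d) ≤ f k θ := by
  intro k
  have hstep : η ≤ 2 / L * c k :=
    hη.trans (by gcongr; exact ciInf_le (Finite.bddBelow_range c) k)
  refine apply_sub_smul_le (hgrad k) (hsmooth k) (hinner k) hη0 ?_
  calc L / 2 * η ≤ L / 2 * (2 / L * c k) := by gcongr
    _ = c k := by field_simp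

/-- Theorem 2 of the paper: if each `f k` is differentiable with `L`-Lipschitz
gradient, `⟪∇f k (θ), d⟫ = c k * ‖d‖²` with `c k ≥ 0`, and the step size
satisfies `0 ≤ η ≤ (2/L) * min_k c k`, then `f k (θ - η • d) ≤ f k θ` for all `k`. -/
theorem adafed_theorem2 {E : Type*} [NormedAddCommGroup E] [InnerProductSpace ℝ E] [CompleteSpace E]
    {K : ℕ} (hK : 0 < K) (f : Fin K → E → ℝ) (grad : Fin K → E → E)
    (hgrad : ∀ k x, HasGradientAt (f k) (grad k x) x)
    (L : ℝ) (hL : 0 < L)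
    (hsmooth : ∀ k x y, ‖grad k x - grad k y‖ ≤ L * ‖x - y‖)
    (θ d : E) (c : Fin K → ℝ) (hc : ∀ k, 0 ≤ c k)
    (hinner : ∀ k, ⟪grad k θ, d⟫ = c k * ‖d‖ ^ 2)
    (η : ℝ) (hη0 : 0 ≤ η) (hη : η ≤ 2 / L * ⨅ k, c k) :
    ∀ k, f k (θ - η • d) ≤ f k θ :=
  adafed_theorem2_general f grad hgrad L hL hsmooth θ d c hinner η hη0 hη
end

section
/- (First part of Lemma 1 of the paper.) Let f_1,…,f_K : EuclideanSpace ℝ n → ℝ be differentiable. If θ* is Pareto-optimal for (f_1,…,f_K), then θ* is Pareto-stationary: there exist λ_1,…,λ_K ≥ 0 with Σ_{k=1}^K λ_k = 1 and Σ_{k=1}^K λ_k ∇f_k(θ*) = 0. -/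
/-!
If no convex combination of the gradients `∇f_k(θ*)` vanished, the compact convex set they span
could be strictly separated from `0` (Gordan's alternative): some direction `v` would satisfy
`⟪∇f_k(θ*), v⟫ < 0` for every `k`. A small step from `θ*` along `v` then strictly decreases all
objectives at once, contradicting Pareto optimality.
-/

open RealInnerProductSpace Set Filter Topology

def IsParetoOptimal {ι α β : Type*} [Preorder β] (f : ι → α → β) (x : α) : Prop :=
  ¬ ∃ y, (∀ k, f k y ≤ f k x) ∧ ∃ j, f j y < f j x

theorem convexHull_range_eq_image_stdSimplex {ι R E : Type*} [Fintype ι] [Field R] [LinearOrder R]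
    [IsStrictOrderedRing R] [AddCommGroup E] [Module R E] (g : ι → E) :
    convexHull R (range g) = Fintype.linearCombination R g '' stdSimplex R ι := by
  classical
  rw [← convexHull_rangle_single_eq_stdSimplex, LinearMap.image_convexHull, ← range_comp]
  congr! 2
  ext i
  simp

theorem exists_inner_neg_of_zero_notMem_convexHull {ι E : Type*} [Finite ι] [NormedAddCommGroup E]
    [InnerProductSpace ℝ E] [CompleteSpace E] {g : ι → E}
    (h : (0 : E) ∉ convexHull ℝ (range g)) : ∃ v, ∀ k, ⟪g k, v⟫ < 0 := by
  obtain ⟨L, u, hL0, hLg⟩ := geometric_hahn_banach_point_closed (convex_convexHull ℝ _)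
    ((finite_range g).isClosed_convexHull ℝ) h
  refine ⟨-(InnerProductSpace.toDual ℝ E).symm L, fun k => ?_⟩
  have hk := hLg _ (subset_convexHull ℝ _ (mem_range_self k))
  rw [map_zero] at hL0
  rw [inner_neg_right, real_inner_comm, InnerProductSpace.toDual_symm_apply]
  linarith

theorem HasLineDerivAt.eventually_lt_of_neg {E : Type*} [AddCommGroup E] [Module ℝ E]
    [TopologicalSpace E] {f : E → ℝ} {f' : ℝ} {x v : E} (h : HasLineDerivAt ℝ f f' x v)
    (hf' : f' < 0) : ∀ᶠ t in 𝓝[>] (0 : ℝ), f (x + t • v) < f x := by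
  filter_upwards [h.tendsto_slope_zero_right.eventually (Iio_mem_nhds hf'), self_mem_nhdsWithin]
    with t (hslope : t⁻¹ * (f (x + t • v) - f x) < 0) (ht : 0 < t)
  exact sub_neg.1 (neg_of_mul_neg_right hslope (inv_nonneg.2 ht.le))

theorem IsParetoOptimal.not_forall_neg_of_hasFDerivAt {ι E : Type*} [Finite ι] [Nonempty ι]
    [NormedAddCommGroup E] [NormedSpace ℝ E] {f : ι → E → ℝ} {L : ι → E →L[ℝ] ℝ} {x : E}
    (hx : IsParetoOptimal f x) (hf : ∀ k, HasFDerivAt (f k) (L k) x) (v : E) :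
    ¬ ∀ k, L k v < 0 := by
  intro hv
  obtain ⟨t, ht⟩ := (eventually_all.2 fun k =>
    ((hf k).hasLineDerivAt v).eventually_lt_of_neg (hv k)).exists
  exact hx ⟨x + t • v, fun k => (ht k).le, Classical.arbitrary ι, ht _⟩

/-- First part of Lemma 1: on Euclidean space, a Pareto-optimal point of
differentiable objectives `f 1, …, f K` is Pareto-stationary: some convex
combination of the gradients at that point vanishes. -/
theorem pareto_optimal_implies_pareto_stationary {n K : ℕ} (hK : 0 < K)
    (f : Fin K → EuclideanSpace ℝ (Fin n) → ℝ)
    (hdiff : ∀ k, Differentiable ℝ (f k))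
    (θs : EuclideanSpace ℝ (Fin n))
    (hpareto : ¬ ∃ θ, (∀ k, f k θ ≤ f k θs) ∧ ∃ j, f j θ < f j θs) :
    ∃ lam : Fin K → ℝ, (∀ k, 0 ≤ lam k) ∧ (∑ k, lam k = 1) ∧
      ∑ k, lam k • gradient (f k) θs = 0 := by
  have := Fin.pos_iff_nonempty.1 hK
  suffices h0 : (0 : EuclideanSpace ℝ (Fin n)) ∈ convexHull ℝ (range fun k => gradient (f k) θs) by
    rw [convexHull_range_eq_image_stdSimplex] at h0
    obtain ⟨lam, ⟨hlam₀, hlam₁⟩, hsum⟩ := h0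
    exact ⟨lam, hlam₀, hlam₁, by simpa [Fintype.linearCombination_apply] using hsum⟩
  by_contra h0
  obtain ⟨v, hv⟩ := exists_inner_neg_of_zero_notMem_convexHull h0
  exact IsParetoOptimal.not_forall_neg_of_hasFDerivAt hpareto
    (fun k => (hdiff k θs).hasGradientAt.hasFDerivAt) v hv
end

section
/- (Deterministic convergence theorem combining the arguments of Theorems 3 and 4.) Let f : E → ℝ be differentiable, bounded below, L-smooth (L > 0), and with ‖∇f(x)‖ ≤ l for all x. Let θ_t, d_t, d'_t be sequences in E with θ_{t+1} = θ_t − η_t d'_t, suppose ⟨∇f(θ_t), d_t⟩ ≥ ‖d_t‖² for all t, and set Δ_t = ‖d_t − d'_t‖. If 0 < η_t ≤ 1/(2L), Σ_{t=0}^∞ η_t = ∞, Σ_{t=0}^∞ η_t Δ_t < ∞, and Σ_{t=0}^∞ η_t² Δ_t² < ∞, then liminf_{t→∞} ‖d_t‖ = 0. -/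
/-!
The descent lemma for an `L`-smooth `f` turns each perturbed step into
`η_t/2 ‖d_t‖² ≤ f(θ_t) - f(θ_{t+1}) + l η_t Δ_t + L η_t² Δ_t²`, the perturbation entering only
through `⟪∇f(θ_t), d_t - d'_t⟫ ≤ l Δ_t` and `‖d'_t‖² ≤ 2‖d_t‖² + 2Δ_t²`. Telescoping against the
lower bound of `f` makes `∑ η_t ‖d_t‖²` finite; since `∑ η_t = ∞`, `‖d_t‖` cannot stay above any
`ε > 0`, so its liminf vanishes.
-/

open RealInnerProductSpace Filter Finset

section Smooth

variable {E : Type*} [NormedAddCommGroup E] [InnerProductSpace ℝ E] [CompleteSpace E]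
  {f : E → ℝ} {grad : E → E} {L : ℝ}

theorem hasDerivAt_comp_add_smul (hgrad : ∀ x, HasGradientAt f (grad x) x) (x v : E) (s : ℝ) :
    HasDerivAt (fun s : ℝ => f (x + s • v)) ⟪grad (x + s • v), v⟫ s := by
  have hline : HasDerivAt (fun s : ℝ => x + s • v) v s := by
    simpa using ((hasDerivAt_id s).smul_const v).const_add x
  have h := (hgrad (x + s • v)).hasFDerivAt.comp_hasDerivAt s hline
  simp only [InnerProductSpace.toDual_apply_apply] at h
  exact h

theorem descent_lemma (hgrad : ∀ x, HasGradientAt f (grad x) x)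
    (hsmooth : ∀ x y, ‖grad x - grad y‖ ≤ L * ‖x - y‖) (x v : E) :
    f (x + v) ≤ f x + ⟪grad x, v⟫ + L / 2 * ‖v‖ ^ 2 := by
  set φ : ℝ → ℝ := fun s => f (x + s • v) - s * ⟪grad x, v⟫ - L / 2 * s ^ 2 * ‖v‖ ^ 2 with hφ
  have hderiv : ∀ s, HasDerivAt φ
      (⟪grad (x + s • v), v⟫ - ⟪grad x, v⟫ - L * s * ‖v‖ ^ 2) s := fun s => by
    have hquad := ((hasDerivAt_pow 2 s).const_mul (L / 2)).mul_const (‖v‖ ^ 2)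
    exact (((hasDerivAt_comp_add_smul hgrad x v s).sub
      ((hasDerivAt_id s).mul_const ⟪grad x, v⟫)).sub hquad).congr_deriv (by ring)
  have hanti : AntitoneOn φ (Set.Icc 0 1) := by
    refine antitoneOn_of_deriv_nonpos (convex_Icc 0 1)
      (fun s _ => (hderiv s).continuousAt.continuousWithinAt)
      (fun s _ => (hderiv s).differentiableAt.differentiableWithinAt) fun s hs => ?_
    rw [interior_Icc] at hs
    have hgrad_sub : ‖grad (x + s • v) - grad x‖ ≤ L * (s * ‖v‖) := by
      simpa [norm_smul, abs_of_pos hs.1] using hsmooth (x + s • v) x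
    have hinner : ⟪grad (x + s • v), v⟫ - ⟪grad x, v⟫ ≤ L * s * ‖v‖ ^ 2 :=
      calc ⟪grad (x + s • v), v⟫ - ⟪grad x, v⟫ = ⟪grad (x + s • v) - grad x, v⟫ :=
            (inner_sub_left _ _ _).symm
        _ ≤ ‖grad (x + s • v) - grad x‖ * ‖v‖ := real_inner_le_norm _ _
        _ ≤ L * (s * ‖v‖) * ‖v‖ := mul_le_mul_of_nonneg_right hgrad_sub (norm_nonneg _)
        _ = L * s * ‖v‖ ^ 2 := by ring
    rw [(hderiv s).deriv]
    linarith
  have h01 := hanti (Set.left_mem_Icc.2 zero_le_one) (Set.right_mem_Icc.2 zero_le_one) zero_le_one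
  simp only [hφ, zero_smul, add_zero, one_smul, zero_mul, one_mul, one_pow, zero_pow two_ne_zero,
    mul_zero, sub_zero] at h01
  linarith

theorem perturbed_descent_step (hgrad : ∀ x, HasGradientAt f (grad x) x) (hL : 0 ≤ L)
    (hsmooth : ∀ x y, ‖grad x - grad y‖ ≤ L * ‖x - y‖) {x d d' : E} {η l : ℝ} (hη : 0 ≤ η)
    (hηL : 2 * L * η ≤ 1) (hl : ‖grad x‖ ≤ l) (hinner : ‖d‖ ^ 2 ≤ ⟪grad x, d⟫) :
    η / 2 * ‖d‖ ^ 2 ≤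
      f x - f (x - η • d') + l * (η * ‖d - d'‖) + L * (η ^ 2 * ‖d - d'‖ ^ 2) := by
  have hdesc := descent_lemma hgrad hsmooth x (-(η • d'))
  rw [← sub_eq_add_neg, inner_neg_right, real_inner_smul_right, norm_neg, norm_smul, mul_pow,
    Real.norm_eq_abs, sq_abs] at hdesc
  have hinner' : ‖d‖ ^ 2 - l * ‖d - d'‖ ≤ ⟪grad x, d'⟫ :=
    calc ‖d‖ ^ 2 - l * ‖d - d'‖ ≤ ⟪grad x, d⟫ - ‖grad x‖ * ‖d - d'‖ := by
          gcongr
      _ ≤ ⟪grad x, d⟫ - ⟪grad x, d - d'⟫ := by gcongr; exact real_inner_le_norm _ _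
      _ = ⟪grad x, d'⟫ := by rw [inner_sub_right]; ring
  have hnorm : ‖d'‖ ^ 2 ≤ 2 * ‖d‖ ^ 2 + 2 * ‖d - d'‖ ^ 2 := by
    have htri : ‖d'‖ ≤ ‖d‖ + ‖d - d'‖ := by
      simpa using norm_sub_le d (d - d')
    nlinarith [norm_nonneg d', sq_nonneg (‖d‖ - ‖d - d'‖)]
  have h1 := mul_le_mul_of_nonneg_left hinner' hη
  have h2 := mul_le_mul_of_nonneg_left hnorm (by positivity : 0 ≤ L * η ^ 2)
  have h3 := mul_le_mul_of_nonneg_right hηL (by positivity : 0 ≤ η * ‖d‖ ^ 2)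
  linarith

end Smooth

theorem summable_of_le_sub_add {F S b : ℕ → ℝ} (hS : ∀ t, 0 ≤ S t) (hF : BddBelow (Set.range F))
    (hb0 : ∀ t, 0 ≤ b t) (hb : Summable b) (h : ∀ t, S t ≤ F t - F (t + 1) + b t) :
    Summable S := by
  obtain ⟨m, hm⟩ := hF
  refine summable_of_sum_range_le (c := F 0 - m + ∑' t, b t) hS fun n => ?_
  calc ∑ t ∈ range n, S t ≤ ∑ t ∈ range n, (F t - F (t + 1) + b t) := sum_le_sum fun t _ => h t
    _ = F 0 - F n + ∑ t ∈ range n, b t := by rw [sum_add_distrib, sum_range_sub']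
    _ ≤ F 0 - m + ∑' t, b t := by
      gcongr
      · exact hm (Set.mem_range_self n)
      · exact hb.sum_le_tsum _ fun t _ => hb0 t

theorem frequently_lt_of_summable_mul {η g : ℕ → ℝ} (hη : ∀ t, 0 ≤ η t) (hdiv : ¬Summable η)
    (h : Summable fun t => η t * g t) {ε : ℝ} (hε : 0 < ε) : ∃ᶠ t in atTop, g t < ε := by
  by_contra hcon
  simp only [not_frequently, not_lt] at hcon
  refine hdiv ((summable_mul_left_iff hε.ne').1 (h.of_norm_bounded_eventually_nat ?_))
  filter_upwards [hcon] with t ht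
  rw [Real.norm_of_nonneg (mul_nonneg hε.le (hη t)), mul_comm]
  exact mul_le_mul_of_nonneg_left ht (hη t)

theorem liminf_eq_zero_of_frequently_lt {α : Type*} {l : Filter α} {u : α → ℝ} (h0 : ∀ t, 0 ≤ u t)
    (h : ∀ ε > 0, ∃ᶠ t in l, u t < ε) : liminf u l = 0 := by
  refine le_antisymm (le_of_forall_pos_le_add fun ε hε => ?_) ?_
  · rw [zero_add]
    exact liminf_le_of_frequently_le ((h ε hε).mono fun t ht => ht.le)
      (isBoundedUnder_of ⟨0, h0⟩)
  · exact le_liminf_of_le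
      (IsCoboundedUnder.of_frequently_le ((h 1 one_pos).mono fun t ht => ht.le))
      (Eventually.of_forall h0)

/-- Deterministic convergence theorem combining the arguments of Theorems 3
and 4: for `f` differentiable, bounded below, `L`-smooth, with `‖∇f‖ ≤ l`,
updates `θ (t+1) = θ t - η t • d' t` with `⟪∇f (θ t), d t⟫ ≥ ‖d t‖²`,
`0 < η t ≤ 1/(2L)`, divergent `∑ η t`, and summable `η t * Δ t` and
`η t² * Δ t²` where `Δ t = ‖d t - d' t‖`, one has `liminf ‖d t‖ = 0`. -/
theorem adafed_convergence_theorem {E : Type*} [NormedAddCommGroup E]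
    [InnerProductSpace ℝ E] [CompleteSpace E]
    (f : E → ℝ) (grad : E → E) (hgrad : ∀ x, HasGradientAt f (grad x) x)
    (hbdd : BddBelow (Set.range f))
    (L : ℝ) (hL : 0 < L)
    (hsmooth : ∀ x y, ‖grad x - grad y‖ ≤ L * ‖x - y‖)
    (l : ℝ) (hl : ∀ x, ‖grad x‖ ≤ l)
    (θ d d' : ℕ → E) (η : ℕ → ℝ)
    (hupd : ∀ t, θ (t + 1) = θ t - η t • d' t)
    (hinner : ∀ t, ‖d t‖ ^ 2 ≤ ⟪grad (θ t), d t⟫)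
    (hη0 : ∀ t, 0 < η t) (hη1 : ∀ t, η t ≤ 1 / (2 * L))
    (hdiv : Tendsto (fun n => ∑ t ∈ Finset.range n, η t) atTop atTop)
    (hsum1 : Summable fun t => η t * ‖d t - d' t‖)
    (hsum2 : Summable fun t => η t ^ 2 * ‖d t - d' t‖ ^ 2) :
    Filter.liminf (fun t => ‖d t‖) atTop = 0 := by
  have hl0 : 0 ≤ l := (norm_nonneg _).trans (hl 0)
  have hηL : ∀ t, 2 * L * η t ≤ 1 := fun t => by
    have := (le_div_iff₀ (by positivity)).1 (hη1 t)
    linarith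
  have hstep : ∀ t, η t / 2 * ‖d t‖ ^ 2 ≤ f (θ t) - f (θ (t + 1)) +
      (l * (η t * ‖d t - d' t‖) + L * (η t ^ 2 * ‖d t - d' t‖ ^ 2)) := fun t => by
    rw [hupd, ← add_assoc]
    exact perturbed_descent_step hgrad hL.le hsmooth (hη0 t).le (hηL t) (hl _) (hinner t)
  have hhalf : Summable fun t => η t / 2 * ‖d t‖ ^ 2 :=
    summable_of_le_sub_add (fun t => by have := hη0 t; positivity)
      (hbdd.mono (Set.range_comp_subset_range θ f)) (fun t => by have := hη0 t; positivity)
      ((hsum1.mul_left l).add (hsum2.mul_left L)) hstep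
  have hsummable : Summable fun t => η t * ‖d t‖ ^ 2 :=
    (hhalf.mul_left 2).congr fun t => by ring
  have hη_not_summable : ¬Summable η :=
    (not_summable_iff_tendsto_nat_atTop_of_nonneg fun t => (hη0 t).le).2 hdiv
  refine liminf_eq_zero_of_frequently_lt (fun t => norm_nonneg _) fun ε hε => ?_
  exact (frequently_lt_of_summable_mul (fun t => (hη0 t).le) hη_not_summable hsummable
    (pow_pos hε 2)).mono fun t ht => lt_of_pow_lt_pow_left₀ 2 hε.le ht
end
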